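/- Let δ ∈ (0,1) and suppose {X̃_t(u)}_t and {X̃_t(v)}_t are stationary ARCH(p) processes driven by the same i.i.d. innovations {Z_t} (nonnegative, mean 1) with coefficient vectors a(u), a(v) satisfying a_0(·) ∈ [ρ₁, ρ₂] ⊂ (0,∞), Σ_{j=1}^p a_j(·) ≤ 1−δ, and the Hölder condition |a_j(u) − a_j(v)| ≤ K|u−v|^β for all j and some β ∈ (0,1], K > 0. Then E|X̃_t²(u) − X̃_t²(v)| ≤ C|u−v|^β, where C depends only on p, δ, ρ₂, K, β. -/

import Mathlib

open MeasureTheory Finset ProbabilityTheory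

/-- The `k`-th order term of the Volterra series of a stationary ARCH process. -/
noncomputable def volterraTerm {Ω : Type*} [MeasurableSpace Ω]
    (a : ℕ → ℝ) (Z : ℤ → Ω → ℝ) (t : ℤ) (k : ℕ) (ω : Ω) : ℝ :=
  ∑' g : Fin k → ℕ+,
    (a 0 * ∏ i : Fin k, a (g i)) *
      ∏ i : Fin k, Z (t - ∑ l ∈ Finset.Iic i, (g l : ℕ)) ω

/-- The Volterra series solution `X_t²` of a stationary ARCH process. -/
noncomputable def volterra {Ω : Type*} [MeasurableSpace Ω]
    (a : ℕ → ℝ) (Z : ℤ → Ω → ℝ) (t : ℤ) (ω : Ω) : ℝ :=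
  ∑' k : ℕ, volterraTerm a Z t k ω

/-!
Write `c_a(g) = a₀ a_{g₁} ⋯ a_{g_k}`, so that the `k`-th Volterra term is
`∑_g c_a(g) Z_{t-g₁} Z_{t-g₁-g₂} ⋯`. The innovations in each product sit at distinct lags, so by
independence the product has mean one, and `E|X̃_t²(a) - X̃_t²(b)| ≤ ∑_k ∑_g |c_a(g) - c_b(g)|`.
Peeling off one coefficient at a time gives
`∑_g |c_a(g) - c_b(g)| ≤ |a₀ - b₀| r^k + b₀ k ‖a - b‖₁ r^(k-1)` when both coefficient sums are at
most `r < 1`, and summing over `k` bounds the `L¹` distance by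
`|a₀ - b₀| / (1 - r) + b₀ ‖a - b‖₁ / (1 - r)²`, which is `O(|u - v|^β)` under the Hölder condition.
-/

open scoped ENNReal

theorem abs_mul_sub_mul_le {a b c d : ℝ} (hc : 0 ≤ c) (hb : 0 ≤ b) :
    |a * c - b * d| ≤ |a - b| * c + b * |c - d| :=
  calc |a * c - b * d| = |(a - b) * c + b * (c - d)| := by ring_nf
    _ ≤ |(a - b) * c| + |b * (c - d)| := abs_add_le _ _
    _ = |a - b| * c + b * |c - d| := by rw [abs_mul, abs_mul, abs_of_nonneg hc, abs_of_nonneg hb]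

section PiFinset

variable {ι : Type*}

theorem Finset.sum_piFinset_const_succ {M : Type*} [AddCommMonoid M] (s : Finset ι) {k : ℕ}
    (f : (Fin (k + 1) → ι) → M) :
    ∑ g ∈ Fintype.piFinset (fun _ : Fin (k + 1) => s), f g =
      ∑ j ∈ s, ∑ g ∈ Fintype.piFinset (fun _ : Fin k => s), f (Fin.cons j g) := by
  have h := filter_piFinset_eq_map_consEquiv (fun _ : Fin (k + 1) => s) (fun _ => True)
  simp only [filter_true] at h
  rw [h, sum_map, sum_product]
  rfl

theorem Finset.sum_piFinset_abs_prod_sub_prod_le (s : Finset ι) {x y : ι → ℝ}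
    (hx : ∀ j, 0 ≤ x j) (hy : ∀ j, 0 ≤ y j) {M : ℝ} (hxM : ∑ j ∈ s, x j ≤ M)
    (hyM : ∑ j ∈ s, y j ≤ M) (k : ℕ) :
    ∑ g ∈ Fintype.piFinset (fun _ : Fin k => s), |∏ i, x (g i) - ∏ i, y (g i)| ≤
      k * (∑ j ∈ s, |x j - y j|) * M ^ (k - 1) := by
  induction k with
  | zero => simp
  | succ k ih =>
    have hM : 0 ≤ M := (sum_nonneg fun j _ => hx j).trans hxM
    have hcons (j : ι) (g : Fin k → ι) :
        |∏ i, x ((Fin.cons j g : Fin (k + 1) → ι) i) -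
            ∏ i, y ((Fin.cons j g : Fin (k + 1) → ι) i)| ≤
          |x j - y j| * ∏ i, x (g i) + y j * |∏ i, x (g i) - ∏ i, y (g i)| := by
      simp only [Fin.prod_univ_succ, Fin.cons_zero, Fin.cons_succ]
      exact abs_mul_sub_mul_le (prod_nonneg fun i _ => hx (g i)) (hy j)
    calc _ ≤ ∑ j ∈ s, ∑ g ∈ Fintype.piFinset (fun _ : Fin k => s),
            (|x j - y j| * ∏ i, x (g i) + y j * |∏ i, x (g i) - ∏ i, y (g i)|) := by
          rw [sum_piFinset_const_succ]
          exact sum_le_sum fun j _ => sum_le_sum fun g _ => hcons j g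
      _ = (∑ j ∈ s, |x j - y j|) * (∑ j ∈ s, x j) ^ k + (∑ j ∈ s, y j) *
            ∑ g ∈ Fintype.piFinset (fun _ : Fin k => s), |∏ i, x (g i) - ∏ i, y (g i)| := by
          simp only [sum_add_distrib, ← mul_sum, ← sum_mul, ← sum_pow']
      _ ≤ (∑ j ∈ s, |x j - y j|) * M ^ k + M * (k * (∑ j ∈ s, |x j - y j|) * M ^ (k - 1)) := by
          have hx0 : 0 ≤ ∑ j ∈ s, x j := sum_nonneg fun j _ => hx j
          gcongr
      _ = (k + 1 : ℕ) * (∑ j ∈ s, |x j - y j|) * M ^ (k + 1 - 1) := by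
          rcases k with _ | k
          · simp
          · simp only [Nat.add_sub_cancel, pow_succ]
            push_cast
            ring

end PiFinset

theorem hasSum_coe_mul_pow_pred {r : ℝ} (hr : |r| < 1) :
    HasSum (fun k : ℕ => (k : ℝ) * r ^ (k - 1)) (1 / (1 - r) ^ 2) := by
  rw [← hasSum_nat_add_iff' 1]
  simpa [add_comm] using hasSum_choose_mul_geometric_of_norm_lt_one 1 (r := r) hr

section Measure

variable {Ω : Type*} [MeasurableSpace Ω] {μ : Measure Ω}

theorem ae_summable_of_tsum_lintegral_ne_top {f : ℕ → Ω → ℝ} (hf0 : ∀ k ω, 0 ≤ f k ω)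
    (hf : ∀ k, Measurable (f k)) (h : ∑' k, ∫⁻ ω, ENNReal.ofReal (f k ω) ∂μ ≠ ∞) :
    ∀ᵐ ω ∂μ, Summable fun k => f k ω := by
  have hmeas k : Measurable fun ω => ENNReal.ofReal (f k ω) := (hf k).ennreal_ofReal
  rw [← lintegral_tsum fun k => (hmeas k).aemeasurable] at h
  filter_upwards [ae_lt_top (Measurable.tsum hmeas) h] with ω hω
  exact (ENNReal.summable_toReal hω.ne).congr fun k => ENNReal.toReal_ofReal (hf0 k ω)

theorem integral_abs_tsum_sub_tsum_le {f g D : ℕ → Ω → ℝ} {c : ℝ} (hc : 0 ≤ c)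
    (hf : ∀ᵐ ω ∂μ, Summable fun k => f k ω) (hg : ∀ᵐ ω ∂μ, Summable fun k => g k ω)
    (hD : ∀ k, Measurable (D k)) (hfgD : ∀ k ω, |f k ω - g k ω| ≤ D k ω)
    (hDc : ∑' k, ∫⁻ ω, ENNReal.ofReal (D k ω) ∂μ ≤ ENNReal.ofReal c) :
    ∫ ω, |∑' k, f k ω - ∑' k, g k ω| ∂μ ≤ c := by
  have hpt : ∀ᵐ ω ∂μ, ENNReal.ofReal ‖|∑' k, f k ω - ∑' k, g k ω|‖ ≤
      ∑' k, ENNReal.ofReal (D k ω) := by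
    filter_upwards [hf, hg] with ω hfω hgω
    rw [Real.norm_eq_abs, abs_abs, ← hfω.tsum_sub hgω, ← Real.enorm_eq_ofReal_abs]
    refine enorm_tsum_le_tsum_enorm.trans (ENNReal.tsum_le_tsum fun k => ?_)
    rw [Real.enorm_eq_ofReal_abs]
    exact ENNReal.ofReal_le_ofReal (hfgD k ω)
  refine (Real.le_norm_self _).trans <| (norm_integral_le_lintegral_norm _).trans <|
    ENNReal.toReal_le_of_le_ofReal hc ?_
  calc _ ≤ ∫⁻ ω, ∑' k, ENNReal.ofReal (D k ω) ∂μ := lintegral_mono_ae hpt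
    _ = ∑' k, ∫⁻ ω, ENNReal.ofReal (D k ω) ∂μ :=
      lintegral_tsum fun k => (hD k).ennreal_ofReal.aemeasurable
    _ ≤ _ := hDc

theorem lintegral_ofReal_prod_comp_injective {ι κ : Type*} [Fintype κ] {Z : ι → Ω → ℝ}
    (hZ : iIndepFun Z μ) (hm : ∀ i, Measurable (Z i)) (h0 : ∀ i ω, 0 ≤ Z i ω) {τ : κ → ι}
    (hτ : Function.Injective τ) :
    ∫⁻ ω, ENNReal.ofReal (∏ i, Z (τ i) ω) ∂μ = ∏ i, ∫⁻ ω, ENNReal.ofReal (Z (τ i) ω) ∂μ := by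
  classical
  have hF := hZ.comp (fun _ => ENNReal.ofReal) fun _ => ENNReal.measurable_ofReal
  have himage (G : ι → ℝ≥0∞) : ∏ j ∈ univ.image τ, G j = ∏ i, G (τ i) :=
    prod_image fun a _ b _ h => hτ h
  have hprod ω : ENNReal.ofReal (∏ i, Z (τ i) ω) = ∏ j ∈ univ.image τ, ENNReal.ofReal (Z j ω) := by
    rw [ENNReal.ofReal_prod_of_nonneg fun i _ => h0 _ _, himage]
  simp_rw [hprod]
  rw [← himage fun j => ∫⁻ ω, ENNReal.ofReal (Z j ω) ∂μ]
  exact lintegral_prod_eq_prod_lintegral_of_indepFun _ _ hF fun j => (hm j).ennreal_ofReal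

end Measure

section Volterra

variable {Ω : Type*}

noncomputable def lagProduct (Z : ℤ → Ω → ℝ) (t : ℤ) {k : ℕ} (g : Fin k → ℕ+) (ω : Ω) : ℝ :=
  ∏ i : Fin k, Z (t - ∑ l ∈ Finset.Iic i, (g l : ℕ)) ω

def volterraCoeff (a : ℕ → ℝ) {k : ℕ} (g : Fin k → ℕ+) : ℝ :=
  a 0 * ∏ i : Fin k, a (g i)

theorem lagProduct_nonneg {Z : ℤ → Ω → ℝ} (hZ0 : ∀ j ω, 0 ≤ Z j ω) (t : ℤ) {k : ℕ}
    (g : Fin k → ℕ+) (ω : Ω) : 0 ≤ lagProduct Z t g ω :=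
  prod_nonneg fun _ _ => hZ0 _ ω

theorem volterraCoeff_nonneg {a : ℕ → ℝ} (ha0 : 0 ≤ a 0) (ha : ∀ j : ℕ+, 0 ≤ a j) {k : ℕ}
    (g : Fin k → ℕ+) : 0 ≤ volterraCoeff a g :=
  mul_nonneg ha0 (prod_nonneg fun i _ => ha (g i))

theorem strictMono_sum_Iic_pnat {k : ℕ} (g : Fin k → ℕ+) :
    StrictMono fun i : Fin k => ∑ l ∈ Iic i, (g l : ℕ) := fun i j hij =>
  sum_lt_sum_of_subset (Iic_subset_Iic.mpr hij.le) (mem_Iic.mpr le_rfl) (by simpa using hij)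
    (by simp) fun _ _ _ => by positivity

theorem sum_abs_volterraCoeff_sub_le (s : Finset ℕ+) {a b : ℕ → ℝ} (ha : ∀ j : ℕ+, 0 ≤ a j)
    (hb0 : 0 ≤ b 0) (hb : ∀ j : ℕ+, 0 ≤ b j) {M : ℝ} (haM : ∑ j ∈ s, a j ≤ M)
    (hbM : ∑ j ∈ s, b j ≤ M) (k : ℕ) :
    ∑ g ∈ Fintype.piFinset (fun _ : Fin k => s), |volterraCoeff a g - volterraCoeff b g| ≤
      |a 0 - b 0| * M ^ k + b 0 * (k * (∑ j ∈ s, |a j - b j|) * M ^ (k - 1)) := by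
  have ha0M : 0 ≤ ∑ j ∈ s, a j := sum_nonneg fun j _ => ha j
  calc _ ≤ ∑ g ∈ Fintype.piFinset (fun _ : Fin k => s),
          (|a 0 - b 0| * ∏ i, a (g i) + b 0 * |∏ i, a (g i) - ∏ i, b (g i)|) :=
        sum_le_sum fun g _ => abs_mul_sub_mul_le (prod_nonneg fun i _ => ha (g i)) hb0
    _ = |a 0 - b 0| * (∑ j ∈ s, a j) ^ k + b 0 * ∑ g ∈ Fintype.piFinset (fun _ : Fin k => s),
          |∏ i, a (g i) - ∏ i, b (g i)| := by
        rw [sum_pow', sum_add_distrib, mul_sum, mul_sum]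
    _ ≤ _ := by
        gcongr
        exact sum_piFinset_abs_prod_sub_prod_le s (x := fun j : ℕ+ => a j) ha hb haM hbM k

variable [MeasurableSpace Ω] {μ : Measure Ω}

theorem volterraTerm_eq_sum {a : ℕ → ℝ} (s : Finset ℕ+) (ha : ∀ j : ℕ+, j ∉ s → a j = 0)
    (Z : ℤ → Ω → ℝ) (t : ℤ) (k : ℕ) (ω : Ω) :
    volterraTerm a Z t k ω =
      ∑ g ∈ Fintype.piFinset (fun _ : Fin k => s), volterraCoeff a g * lagProduct Z t g ω := by
  refine tsum_eq_sum fun g hg => ?_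
  obtain ⟨i, hi⟩ := not_forall.mp (mt Fintype.mem_piFinset.mpr hg)
  have hcoeff : ∏ i, a (g i) = 0 := prod_eq_zero (mem_univ i) (ha _ hi)
  simp [hcoeff]

theorem measurable_lagProduct {Z : ℤ → Ω → ℝ} (hZm : ∀ j, Measurable (Z j)) (t : ℤ) {k : ℕ}
    (g : Fin k → ℕ+) : Measurable (lagProduct Z t g) :=
  Finset.measurable_prod _ fun _ _ => hZm _

theorem lintegral_ofReal_lagProduct {Z : ℤ → Ω → ℝ} (hZ : iIndepFun Z μ)
    (hZm : ∀ j, Measurable (Z j)) (hZ0 : ∀ j ω, 0 ≤ Z j ω)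
    (hZ1 : ∀ j, ∫⁻ ω, ENNReal.ofReal (Z j ω) ∂μ = 1) (t : ℤ) {k : ℕ} (g : Fin k → ℕ+) :
    ∫⁻ ω, ENNReal.ofReal (lagProduct Z t g ω) ∂μ = 1 := by
  have hlag : Function.Injective fun i : Fin k => t - ((∑ l ∈ Iic i, (g l : ℕ) : ℕ) : ℤ) :=
    sub_right_injective.comp (Nat.cast_injective.comp (strictMono_sum_Iic_pnat g).injective)
  unfold lagProduct
  rw [lintegral_ofReal_prod_comp_injective hZ hZm hZ0 hlag]
  simp [hZ1]

theorem lintegral_ofReal_sum_mul_lagProduct {Z : ℤ → Ω → ℝ} (hZ : iIndepFun Z μ)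
    (hZm : ∀ j, Measurable (Z j)) (hZ0 : ∀ j ω, 0 ≤ Z j ω)
    (hZ1 : ∀ j, ∫⁻ ω, ENNReal.ofReal (Z j ω) ∂μ = 1) (t : ℤ) {k : ℕ}
    (S : Finset (Fin k → ℕ+)) {b : (Fin k → ℕ+) → ℝ} (hb : ∀ g, 0 ≤ b g) :
    ∫⁻ ω, ENNReal.ofReal (∑ g ∈ S, b g * lagProduct Z t g ω) ∂μ =
      ENNReal.ofReal (∑ g ∈ S, b g) := by
  have hterm (ω : Ω) : ENNReal.ofReal (∑ g ∈ S, b g * lagProduct Z t g ω) =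
      ∑ g ∈ S, ENNReal.ofReal (b g) * ENNReal.ofReal (lagProduct Z t g ω) := by
    rw [ENNReal.ofReal_sum_of_nonneg fun g _ => mul_nonneg (hb g) (lagProduct_nonneg hZ0 t g ω)]
    exact sum_congr rfl fun g _ => ENNReal.ofReal_mul (hb g)
  simp_rw [hterm]
  rw [lintegral_finsetSum _ fun g _ => ((measurable_lagProduct hZm t g).ennreal_ofReal).const_mul _,
    ENNReal.ofReal_sum_of_nonneg fun g _ => hb g]
  refine sum_congr rfl fun g _ => ?_
  rw [lintegral_const_mul _ (measurable_lagProduct hZm t g).ennreal_ofReal,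
    lintegral_ofReal_lagProduct hZ hZm hZ0 hZ1, mul_one]

theorem volterraTerm_nonneg {Z : ℤ → Ω → ℝ} (hZ0 : ∀ j ω, 0 ≤ Z j ω) {a : ℕ → ℝ}
    (s : Finset ℕ+) (hsupp : ∀ j : ℕ+, j ∉ s → a j = 0) (ha0 : 0 ≤ a 0) (ha : ∀ j : ℕ+, 0 ≤ a j)
    (t : ℤ) (k : ℕ) (ω : Ω) : 0 ≤ volterraTerm a Z t k ω := by
  rw [volterraTerm_eq_sum s hsupp]
  exact sum_nonneg fun g _ =>
    mul_nonneg (volterraCoeff_nonneg ha0 ha g) (lagProduct_nonneg hZ0 t g ω)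

theorem measurable_volterraTerm {Z : ℤ → Ω → ℝ} (hZm : ∀ j, Measurable (Z j)) {a : ℕ → ℝ}
    (s : Finset ℕ+) (hsupp : ∀ j : ℕ+, j ∉ s → a j = 0) (t : ℤ) (k : ℕ) :
    Measurable (volterraTerm a Z t k) := by
  simp_rw [funext (volterraTerm_eq_sum s hsupp Z t k)]
  exact Finset.measurable_sum _ fun g _ => (measurable_lagProduct hZm t g).const_mul _

theorem lintegral_ofReal_volterraTerm {Z : ℤ → Ω → ℝ} (hZ : iIndepFun Z μ)
    (hZm : ∀ j, Measurable (Z j)) (hZ0 : ∀ j ω, 0 ≤ Z j ω)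
    (hZ1 : ∀ j, ∫⁻ ω, ENNReal.ofReal (Z j ω) ∂μ = 1) {a : ℕ → ℝ} (s : Finset ℕ+)
    (hsupp : ∀ j : ℕ+, j ∉ s → a j = 0) (ha0 : 0 ≤ a 0) (ha : ∀ j : ℕ+, 0 ≤ a j) (t : ℤ)
    (k : ℕ) :
    ∫⁻ ω, ENNReal.ofReal (volterraTerm a Z t k ω) ∂μ =
      ENNReal.ofReal (a 0 * (∑ j ∈ s, a j) ^ k) := by
  simp_rw [volterraTerm_eq_sum s hsupp,
    lintegral_ofReal_sum_mul_lagProduct hZ hZm hZ0 hZ1 t _ (volterraCoeff_nonneg ha0 ha)]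
  rw [sum_pow', mul_sum]
  rfl

theorem ae_summable_volterraTerm {Z : ℤ → Ω → ℝ} (hZ : iIndepFun Z μ)
    (hZm : ∀ j, Measurable (Z j)) (hZ0 : ∀ j ω, 0 ≤ Z j ω)
    (hZ1 : ∀ j, ∫⁻ ω, ENNReal.ofReal (Z j ω) ∂μ = 1) {a : ℕ → ℝ} (s : Finset ℕ+)
    (hsupp : ∀ j : ℕ+, j ∉ s → a j = 0) (ha0 : 0 ≤ a 0) (ha : ∀ j : ℕ+, 0 ≤ a j)
    (has : ∑ j ∈ s, a j < 1) (t : ℤ) :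
    ∀ᵐ ω ∂μ, Summable fun k => volterraTerm a Z t k ω := by
  have hs0 : 0 ≤ ∑ j ∈ s, a j := sum_nonneg fun j _ => ha j
  have hgeom := (summable_geometric_of_lt_one hs0 has).mul_left (a 0)
  refine ae_summable_of_tsum_lintegral_ne_top (volterraTerm_nonneg hZ0 s hsupp ha0 ha t)
    (measurable_volterraTerm hZm s hsupp t) ?_
  simp_rw [lintegral_ofReal_volterraTerm hZ hZm hZ0 hZ1 s hsupp ha0 ha t]
  rw [← ENNReal.ofReal_tsum_of_nonneg (fun k => by positivity) hgeom]
  exact ENNReal.ofReal_ne_top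

theorem integral_abs_volterra_sub_volterra_le {Z : ℤ → Ω → ℝ} (hZ : iIndepFun Z μ)
    (hZm : ∀ j, Measurable (Z j)) (hZ0 : ∀ j ω, 0 ≤ Z j ω)
    (hZ1 : ∀ j, ∫⁻ ω, ENNReal.ofReal (Z j ω) ∂μ = 1) {a b : ℕ → ℝ} (s : Finset ℕ+)
    (ha_supp : ∀ j : ℕ+, j ∉ s → a j = 0) (hb_supp : ∀ j : ℕ+, j ∉ s → b j = 0)
    (ha0 : 0 ≤ a 0) (hb0 : 0 ≤ b 0) (ha : ∀ j : ℕ+, 0 ≤ a j) (hb : ∀ j : ℕ+, 0 ≤ b j) {r : ℝ}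
    (hr : r < 1) (har : ∑ j ∈ s, a j ≤ r) (hbr : ∑ j ∈ s, b j ≤ r) (t : ℤ) :
    ∫ ω, |volterra a Z t ω - volterra b Z t ω| ∂μ ≤
      |a 0 - b 0| / (1 - r) + b 0 * (∑ j ∈ s, |a j - b j|) / (1 - r) ^ 2 := by
  have hr0 : 0 ≤ r := (sum_nonneg fun j _ => ha j).trans har
  have h1r : 0 < 1 - r := sub_pos.mpr hr
  set E := ∑ j ∈ s, |a j - b j|
  have hE : 0 ≤ E := sum_nonneg fun j _ => abs_nonneg _
  have hsum : HasSum (fun k : ℕ => |a 0 - b 0| * r ^ k + b 0 * (k * E * r ^ (k - 1)))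
      (|a 0 - b 0| / (1 - r) + b 0 * E / (1 - r) ^ 2) := by
    convert! ((hasSum_geometric_of_lt_one hr0 hr).mul_left |a 0 - b 0|).add
      ((hasSum_coe_mul_pow_pred (abs_lt.mpr ⟨by linarith, hr⟩)).mul_left (b 0 * E)) using 1
    · funext k; ring
    · ring
  refine integral_abs_tsum_sub_tsum_le (by positivity)
    (ae_summable_volterraTerm hZ hZm hZ0 hZ1 s ha_supp ha0 ha (har.trans_lt hr) t)
    (ae_summable_volterraTerm hZ hZm hZ0 hZ1 s hb_supp hb0 hb (hbr.trans_lt hr) t)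
    (D := fun k ω => ∑ g ∈ Fintype.piFinset (fun _ : Fin k => s),
      |volterraCoeff a g - volterraCoeff b g| * lagProduct Z t g ω)
    (fun k => Finset.measurable_sum _ fun g _ => (measurable_lagProduct hZm t g).const_mul _)
    (fun k ω => ?_) ?_
  · rw [volterraTerm_eq_sum s ha_supp, volterraTerm_eq_sum s hb_supp, ← sum_sub_distrib]
    refine (abs_sum_le_sum_abs _ _).trans_eq (sum_congr rfl fun g _ => ?_)
    rw [← sub_mul, abs_mul, abs_of_nonneg (lagProduct_nonneg hZ0 t g ω)]
  · simp_rw [lintegral_ofReal_sum_mul_lagProduct hZ hZm hZ0 hZ1 t _ fun g => abs_nonneg _]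
    calc _ ≤ ∑' k : ℕ, ENNReal.ofReal (|a 0 - b 0| * r ^ k + b 0 * (k * E * r ^ (k - 1))) :=
          ENNReal.tsum_le_tsum fun k => ENNReal.ofReal_le_ofReal <|
            sum_abs_volterraCoeff_sub_le s ha hb0 hb har hbr k
      _ = _ := by
          rw [← ENNReal.ofReal_tsum_of_nonneg (fun k => by positivity) hsum.summable,
            hsum.tsum_eq]

end Volterra

theorem stmt_17_general (δ : ℝ) (hδ : δ ∈ Set.Ioo (0:ℝ) 1) (p : ℕ) (hp : 1 ≤ p)
    (ρ₂ K β : ℝ) (hρ₂ : 0 < ρ₂) (hK : 0 < K) :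
    ∃ C > (0:ℝ), ∀ (Ω : Type) (m0 : MeasurableSpace Ω) (μ : Measure Ω),
      IsProbabilityMeasure μ →
      ∀ (Z : ℤ → Ω → ℝ), (∀ t, Measurable (Z t)) →
        (∀ t ω, 0 ≤ Z t ω) → (∀ t, Integrable (Z t) μ) →
        (∀ t, ∫ ω, Z t ω ∂μ = 1) →
        iIndepFun Z μ →
        (∀ t, IdentDistrib (Z t) (Z 0) μ μ) →
      ∀ (ρ₁ : ℝ) (au av : ℕ → ℝ) (u v : ℝ), 0 < ρ₁ →
        (ρ₁ ≤ au 0 ∧ au 0 ≤ ρ₂) → (ρ₁ ≤ av 0 ∧ av 0 ≤ ρ₂) →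
        (∀ j, 1 ≤ j → 0 ≤ au j) → (∀ j, 1 ≤ j → 0 ≤ av j) →
        (∀ j, p < j → au j = 0) → (∀ j, p < j → av j = 0) →
        (∑ j ∈ Icc 1 p, au j) ≤ 1 - δ → (∑ j ∈ Icc 1 p, av j) ≤ 1 - δ →
        (∀ j, j ≤ p → |au j - av j| ≤ K * |u - v| ^ β) →
      ∀ t : ℤ,
        ∫ ω, |volterra au Z t ω - volterra av Z t ω| ∂μ ≤ C * |u - v| ^ β := by
  obtain ⟨hδ0, hδ1⟩ := hδ
  refine ⟨K / δ + p * ρ₂ * K / δ ^ 2, by positivity, ?_⟩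
  intro Ω _ μ _ Z hZm hZ0 hZi hZ1 hZ _ ρ₁ au av u v hρ₁ hau0 hav0 hau hav hau_supp hav_supp
    hau_sum hav_sum hK t
  set s : Finset ℕ+ := Icc 1 (p.toPNat hp) with hs_def
  have hs (a : ℕ → ℝ) : ∑ j ∈ s, a j = ∑ j ∈ Icc 1 p, a j :=
    (sum_map _ _ _).symm.trans (congrArg (∑ j ∈ ·, a j) (PNat.map_subtype_embedding_Icc _ _))
  have hsupp (a : ℕ → ℝ) (ha : ∀ j, p < j → a j = 0) (j : ℕ+) (hj : j ∉ s) : a j = 0 := by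
    simp only [hs_def, mem_Icc, not_and, not_le] at hj
    exact ha j (by exact_mod_cast hj one_le)
  have hlint (j : ℤ) : ∫⁻ ω, ENNReal.ofReal (Z j ω) ∂μ = 1 := by
    rw [← ofReal_integral_eq_lintegral_ofReal (hZi j) (ae_of_all _ (hZ0 j)), hZ1,
      ENNReal.ofReal_one]
  have hE : ∑ j ∈ s, |au j - av j| ≤ p * (K * |u - v| ^ β) := by
    calc _ = ∑ j ∈ Icc 1 p, |au j - av j| := hs fun j => |au j - av j|
      _ ≤ #(Icc 1 p) • (K * |u - v| ^ β) :=
        sum_le_card_nsmul _ _ _ fun j hj => hK j (mem_Icc.mp hj).2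
      _ = p * (K * |u - v| ^ β) := by rw [Nat.card_Icc, Nat.add_sub_cancel, nsmul_eq_mul]
  calc _ ≤ |au 0 - av 0| / (1 - (1 - δ)) + av 0 * (∑ j ∈ s, |au j - av j|) / (1 - (1 - δ)) ^ 2 :=
        integral_abs_volterra_sub_volterra_le hZ hZm hZ0 hlint s (hsupp au hau_supp)
          (hsupp av hav_supp) (hρ₁.le.trans hau0.1) (hρ₁.le.trans hav0.1)
          (fun j => hau j j.pos) (fun j => hav j j.pos) (by linarith)
          ((hs au).trans_le hau_sum) ((hs av).trans_le hav_sum) t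
    _ ≤ K * |u - v| ^ β / δ + ρ₂ * (p * (K * |u - v| ^ β)) / δ ^ 2 := by
        rw [sub_sub_cancel]
        gcongr
        · exact hK 0 (Nat.zero_le p)
        · exact hav0.2
    _ = _ := by ring

/-- `L¹`-Hölder continuity of the stationary approximation family of a
tvARCH(p) process: under Hölder continuity of the coefficients,
`E|X̃_t²(u) − X̃_t²(v)| ≤ C |u−v|^β` with `C` depending only on
`p, δ, ρ₂, K, β`. -/
theorem stmt_17 (δ : ℝ) (hδ : δ ∈ Set.Ioo (0:ℝ) 1) (p : ℕ) (hp : 1 ≤ p)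
    (ρ₂ K β : ℝ) (hρ₂ : 0 < ρ₂) (hK : 0 < K) (hβ : β ∈ Set.Ioc (0:ℝ) 1) :
    ∃ C > (0:ℝ), ∀ (Ω : Type) (m0 : MeasurableSpace Ω) (μ : Measure Ω),
      IsProbabilityMeasure μ →
      ∀ (Z : ℤ → Ω → ℝ), (∀ t, Measurable (Z t)) →
        (∀ t ω, 0 ≤ Z t ω) → (∀ t, Integrable (Z t) μ) →
        (∀ t, ∫ ω, Z t ω ∂μ = 1) →
        iIndepFun Z μ →
        (∀ t, IdentDistrib (Z t) (Z 0) μ μ) →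
      ∀ (ρ₁ : ℝ) (au av : ℕ → ℝ) (u v : ℝ), 0 < ρ₁ →
        (ρ₁ ≤ au 0 ∧ au 0 ≤ ρ₂) → (ρ₁ ≤ av 0 ∧ av 0 ≤ ρ₂) →
        (∀ j, 1 ≤ j → 0 ≤ au j) → (∀ j, 1 ≤ j → 0 ≤ av j) →
        (∀ j, p < j → au j = 0) → (∀ j, p < j → av j = 0) →
        (∑ j ∈ Icc 1 p, au j) ≤ 1 - δ → (∑ j ∈ Icc 1 p, av j) ≤ 1 - δ →
        (∀ j, j ≤ p → |au j - av j| ≤ K * |u - v| ^ β) →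
      ∀ t : ℤ,
        ∫ ω, |volterra au Z t ω - volterra av Z t ω| ∂μ ≤ C * |u - v| ^ β :=
  stmt_17_general δ hδ p hp ρ₂ K β hρ₂ hK
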